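/- arXiv:0804.4065 — 8 statements merged into one kernel-verified Lean document; each statement's English description precedes it below -/
import Mathlib

section
/- In the field F = Frac(ℚ[u₁,u₂]), define a : ℕ → F by a₁ = u₁, a₂ = u₂ and a_{k+2} = (1 + a_{k+1})/a_k for k ≥ 1. Then every a_k is nonzero (so the recurrence is well defined) and the sequence is periodic with period 5: a_{k+5} = a_k for all k ≥ 1. -/
/-- The field `F = Frac(ℚ[u₁,u₂])` of rational functions in two variables over `ℚ`. -/
abbrev RatFuncTwo : Type := FractionRing (MvPolynomial (Fin 2) ℚ)

/-- The images `u₁, u₂` of the two variables in `F = Frac(ℚ[u₁,u₂])`. -/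
noncomputable def uVar (i : Fin 2) : RatFuncTwo :=
  algebraMap (MvPolynomial (Fin 2) ℚ) RatFuncTwo (MvPolynomial.X i)

lemma map_ne_zero' {p : MvPolynomial (Fin 2) ℚ} (hp : p ≠ 0) :
    algebraMap (MvPolynomial (Fin 2) ℚ) RatFuncTwo p ≠ 0 :=
  (map_ne_zero_iff _ (IsFractionRing.injective _ _)).mpr hp

lemma one_add_X_ne (i : Fin 2) : (1 + MvPolynomial.X i : MvPolynomial (Fin 2) ℚ) ≠ 0 := by
  intro h
  have := congrArg (MvPolynomial.coeff 0) h
  simp [MvPolynomial.coeff_add, MvPolynomial.coeff_X, MvPolynomial.coeff_one] at this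

lemma one_add_X_add_X_ne :
    (1 + MvPolynomial.X 0 + MvPolynomial.X 1 : MvPolynomial (Fin 2) ℚ) ≠ 0 := by
  intro h
  have := congrArg (MvPolynomial.coeff 0) h
  simp [MvPolynomial.coeff_add, MvPolynomial.coeff_X, MvPolynomial.coeff_one] at this

/-- For the type `A₂` exchange recurrence `a_{k+2} = (1 + a_{k+1})/a_k` with
`a₁ = u₁`, `a₂ = u₂`, every `a_k` (`k ≥ 1`) is nonzero and the sequence is
periodic with period `5`: `a_{k+5} = a_k` for all `k ≥ 1`. -/
theorem a2_recurrence_period_five (a : ℕ → RatFuncTwo)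
    (h1 : a 1 = uVar 0) (h2 : a 2 = uVar 1)
    (hrec : ∀ k, 1 ≤ k → a (k + 2) = (1 + a (k + 1)) / a k) :
    (∀ k, 1 ≤ k → a k ≠ 0) ∧ (∀ k, 1 ≤ k → a (k + 5) = a k) := by
  set u1 : RatFuncTwo := uVar 0 with hu1
  set u2 : RatFuncTwo := uVar 1 with hu2
  have hu1ne : u1 ≠ 0 := map_ne_zero' (MvPolynomial.X_ne_zero 0)
  have hu2ne : u2 ≠ 0 := map_ne_zero' (MvPolynomial.X_ne_zero 1)
  have hA : (1 : RatFuncTwo) + u1 ≠ 0 := by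
    have := map_ne_zero' (one_add_X_ne 0)
    simpa [hu1, uVar, map_add, map_one] using this
  have hB : (1 : RatFuncTwo) + u2 ≠ 0 := by
    have := map_ne_zero' (one_add_X_ne 1)
    simpa [hu2, uVar, map_add, map_one] using this
  have hC : (1 : RatFuncTwo) + u1 + u2 ≠ 0 := by
    have := map_ne_zero' one_add_X_add_X_ne
    simpa [hu1, hu2, uVar, map_add, map_one] using this
  have h3 : a 3 = (1 + u2) / u1 := by
    have := hrec 1 le_rfl; rw [this, h1, h2]
  have h4 : a 4 = (1 + u1 + u2) / (u1 * u2) := by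
    have := hrec 2 (by norm_num); rw [show (2:ℕ)+2 = 4 from rfl, show (2:ℕ)+1 = 3 from rfl] at this
    rw [this, h2, h3]
    field_simp
    ring
  have h5 : a 5 = (1 + u1) / u2 := by
    have := hrec 3 (by norm_num); rw [show (3:ℕ)+2 = 5 from rfl, show (3:ℕ)+1 = 4 from rfl] at this
    rw [this, h3, h4]
    field_simp
    ring
  have h6 : a 6 = u1 := by
    have := hrec 4 (by norm_num); rw [show (4:ℕ)+2 = 6 from rfl, show (4:ℕ)+1 = 5 from rfl] at this
    rw [this, h4, h5]
    field_simp
    ring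
  have h7 : a 7 = u2 := by
    have := hrec 5 (by norm_num); rw [show (5:ℕ)+2 = 7 from rfl, show (5:ℕ)+1 = 6 from rfl] at this
    rw [this, h5, h6]
    field_simp
  -- periodicity
  have hper : ∀ k, 1 ≤ k → a (k + 5) = a k := by
    have key : ∀ k, a (k + 1 + 5) = a (k + 1) ∧ a (k + 2 + 5) = a (k + 2) := by
      intro k
      induction k with
      | zero => exact ⟨h6.trans h1.symm, h7.trans h2.symm⟩
      | succ n ih =>
        refine ⟨ih.2, ?_⟩
        have e1 := hrec (n + 1 + 5) (by omega)
        have e2 := hrec (n + 1) (by omega)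
        rw [show n + 1 + 5 + 2 = n + 1 + 2 + 5 by ring, show n + 1 + 5 + 1 = n + 1 + 1 + 5 by ring] at e1
        rw [show n + 1 + 1 + 5 = n + 2 + 5 by ring] at e1
        rw [show n + 1 + 2 = n + 2 + 1 by ring]
        rw [show n + 1 + 2 + 5 = n + 2 + 1 + 5 by ring] at e1 ⊢
        rw [e1, ih.1, ih.2, show n + 2 = n + 1 + 1 by ring, ← e2]
    intro k hk
    obtain ⟨m, rfl⟩ := Nat.exists_eq_add_of_le hk
    rcases m with _ | m
    · simpa using (key 0).1
    · have := (key m).2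
      simpa [show 1 + (m + 1) = m + 2 by ring] using this
  refine ⟨?_, hper⟩
  intro k hk
  induction k using Nat.strong_induction_on with
  | _ k ih =>
    match k, hk with
    | 1, _ => rw [h1]; exact hu1ne
    | 2, _ => rw [h2]; exact hu2ne
    | 3, _ => rw [h3]; exact div_ne_zero hB hu1ne
    | 4, _ => rw [h4]; exact div_ne_zero hC (mul_ne_zero hu1ne hu2ne)
    | 5, _ => rw [h5]; exact div_ne_zero hA hu2ne
    | (m + 6), _ =>
      have := hper (m + 1) (by omega)
      rw [show m + 6 = m + 1 + 5 by ring, this]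
      exact ih (m + 1) (by omega) (by omega)
end

section
/- In the field F = Frac(ℚ[u₁,u₂]), define a : ℕ → F by a₁ = u₁, a₂ = u₂ and a_{k+2} = (1 + a_{k+1})/a_k for k ≥ 1. Then the set of values of the sequence is exactly the five-element set { u₁, u₂, (1+u₂)/u₁, (1+u₁+u₂)/(u₁u₂), (1+u₁)/u₂ }; in particular the type A₂ cluster algebra has exactly five cluster variables. -/
lemma uvar_map_ne_zero (p : MvPolynomial (Fin 2) ℚ) (hp : p ≠ 0) :
    algebraMap (MvPolynomial (Fin 2) ℚ) RatFuncTwo p ≠ 0 := by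
  intro h
  exact hp (IsFractionRing.injective (MvPolynomial (Fin 2) ℚ) RatFuncTwo (by simpa using h))

lemma uvar_ne_zero (i : Fin 2) : uVar i ≠ 0 :=
  uvar_map_ne_zero _ (MvPolynomial.X_ne_zero i)

lemma one_add_uvar_ne_zero (i : Fin 2) : 1 + uVar i ≠ 0 := by
  have h : (1 : RatFuncTwo) + uVar i
      = algebraMap (MvPolynomial (Fin 2) ℚ) RatFuncTwo (1 + MvPolynomial.X i) := by
    simp [uVar]
  rw [h]
  apply uvar_map_ne_zero
  intro h'
  have := congrArg (MvPolynomial.coeff 0) h'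
  simp [MvPolynomial.coeff_X] at this

lemma one_add_add_ne_zero : 1 + uVar 0 + uVar 1 ≠ 0 := by
  have h : (1 : RatFuncTwo) + uVar 0 + uVar 1
      = algebraMap (MvPolynomial (Fin 2) ℚ) RatFuncTwo
          (1 + MvPolynomial.X 0 + MvPolynomial.X 1) := by
    simp [uVar]
  rw [h]
  apply uvar_map_ne_zero
  intro h'
  have := congrArg (MvPolynomial.coeff 0) h'
  simp [MvPolynomial.coeff_X] at this

/-- For the type `A₂` exchange recurrence `a_{k+2} = (1 + a_{k+1})/a_k` with
`a₁ = u₁`, `a₂ = u₂`, the set of values of the sequence is exactly the five-element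
set `{u₁, u₂, (1+u₂)/u₁, (1+u₁+u₂)/(u₁u₂), (1+u₁)/u₂}`: the type `A₂` cluster
algebra has exactly five cluster variables. -/
theorem a2_recurrence_five_cluster_variables (a : ℕ → RatFuncTwo)
    (h1 : a 1 = uVar 0) (h2 : a 2 = uVar 1)
    (hrec : ∀ k, 1 ≤ k → a (k + 2) = (1 + a (k + 1)) / a k) :
    {v : RatFuncTwo | ∃ k, 1 ≤ k ∧ a k = v} =
      ({uVar 0, uVar 1, (1 + uVar 1) / uVar 0,
        (1 + uVar 0 + uVar 1) / (uVar 0 * uVar 1),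
        (1 + uVar 0) / uVar 1} : Set RatFuncTwo) := by
  set x := uVar 0 with hxdef
  set y := uVar 1 with hydef
  have hx : x ≠ 0 := uvar_ne_zero 0
  have hy : y ≠ 0 := uvar_ne_zero 1
  have hx1 : 1 + x ≠ 0 := one_add_uvar_ne_zero 0
  have hy1 : 1 + y ≠ 0 := one_add_uvar_ne_zero 1
  have hxy1 : 1 + x + y ≠ 0 := one_add_add_ne_zero
  have h3 : a 3 = (1 + y) / x := by rw [hrec 1 le_rfl, h1, h2]
  have h4 : a 4 = (1 + x + y) / (x * y) := by
    rw [hrec 2 (by norm_num), h2, h3]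
    field_simp
    ring
  have h5 : a 5 = (1 + x) / y := by
    rw [hrec 3 (by norm_num), h3, h4]
    field_simp
    ring
  have h6 : a 6 = x := by
    rw [hrec 4 (by norm_num), h4, h5]
    field_simp
    ring
  have h7 : a 7 = y := by
    rw [hrec 5 (by norm_num), h5, h6]
    rw [← h1, ← h2] at *
    field_simp
  -- periodicity
  have key : ∀ k, 1 ≤ k → a (k + 5) = a k ∧ a (k + 6) = a (k + 1) := by
    intro k hk
    induction k with
    | zero => omega
    | succ n ih =>
      rcases Nat.eq_or_lt_of_le hk with h | h
      · constructor
        · rw [← h, h6, h1]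
        · rw [← h, h7, h2]
      · have hn : 1 ≤ n := by omega
        obtain ⟨p1, p2⟩ := ih hn
        refine ⟨p2, ?_⟩
        have e1 : n + 1 + 6 = (n + 5) + 2 := by ring
        have e2 : n + 1 + 1 = n + 2 := by ring
        rw [e1, hrec (n + 5) (by omega), e2, hrec n hn]
        rw [show n + 5 + 1 = n + 6 from rfl, p2, p1]
  have mem : ∀ k, 1 ≤ k → a k ∈
      ({x, y, (1 + y) / x, (1 + x + y) / (x * y), (1 + x) / y} : Set RatFuncTwo) := by
    intro k
    induction k using Nat.strong_induction_on with
    | _ k ih =>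
      intro hk
      match k, hk with
      | 1, _ => rw [h1]; left; rfl
      | 2, _ => rw [h2]; right; left; rfl
      | 3, _ => rw [h3]; right; right; left; rfl
      | 4, _ => rw [h4]; right; right; right; left; rfl
      | 5, _ => rw [h5]; right; right; right; right; rfl
      | (m + 6), _ =>
        have := (key (m + 1) (by omega)).1
        rw [show m + 6 = m + 1 + 5 from rfl, this]
        exact ih (m + 1) (by omega) (by omega)
  ext v
  constructor
  · rintro ⟨k, hk, rfl⟩
    exact mem k hk
  · rintro (rfl | rfl | rfl | rfl | rfl)
    · exact ⟨1, le_rfl, h1⟩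
    · exact ⟨2, by norm_num, h2⟩
    · exact ⟨3, by norm_num, h3⟩
    · exact ⟨4, by norm_num, h4⟩
    · exact ⟨5, by norm_num, h5⟩
end

section
/- Every inclusion-maximal set of pairwise non-crossing m-diagonals of a convex (nm+2)-gon has cardinality exactly n−1. In particular, the maximal number of non-crossing m-diagonals is an invariant of the polygon, equal to n−1. -/
/-- A diagonal of a convex `N`-gon with vertices labelled `1, …, N` in clockwise order:
a pair `(i, j)` with `1 ≤ i < j ≤ N`, `j - i ≥ 2` and `(i, j) ≠ (1, N)`. -/
def IsDiagonal (N : ℕ) (d : ℕ × ℕ) : Prop :=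
  1 ≤ d.1 ∧ d.1 < d.2 ∧ d.2 ≤ N ∧ 2 ≤ d.2 - d.1 ∧ d ≠ (1, N)

/-- An `m`-diagonal of the `(nm+2)`-gon: a diagonal `(i, j)` with `j - i ≡ 1 (mod m)`. -/
def IsMDiagonal (N m : ℕ) (d : ℕ × ℕ) : Prop :=
  IsDiagonal N d ∧ d.2 - d.1 ≡ 1 [MOD m]

/-- Two diagonals `(i,j)` and `(k,l)` cross if `i < k < j < l` or `k < i < l < j`. -/
def DiagCross (d e : ℕ × ℕ) : Prop :=
  (d.1 < e.1 ∧ e.1 < d.2 ∧ d.2 < e.2) ∨ (e.1 < d.1 ∧ d.1 < e.2 ∧ e.2 < d.2)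

lemma NCX.ge_of_dvd (m L : ℕ) (h : m ∣ L - 1) (hL : 2 ≤ L) : m + 1 ≤ L := by
  rcases h with ⟨t, ht⟩
  rcases Nat.eq_zero_or_pos t with h0 | h1
  · subst h0; simp at ht; omega
  · have h2 : m ≤ m * t := Nat.le_mul_of_pos_right m h1
    rw [← ht] at h2; omega

lemma NCX.ge2_of_dvd (m L : ℕ) (h : m ∣ L - 1) (hL : m + 2 ≤ L) : 2 * m + 1 ≤ L := by
  rcases h with ⟨t, ht⟩
  have h2 : 2 ≤ t := by
    by_contra h'
    push_neg at h'
    have : m * t ≤ m * 1 := Nat.mul_le_mul_left m (by omega)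
    rw [← ht] at this; omega
  have h3 : m * 2 ≤ m * t := Nat.mul_le_mul_left m h2
  rw [← ht] at h3; omega

lemma NCX.mdiag_facts {N m : ℕ} {d : ℕ × ℕ} (h : IsMDiagonal N m d) :
    1 ≤ d.1 ∧ d.1 + m + 1 ≤ d.2 ∧ d.2 ≤ N ∧ ¬(d.1 = 1 ∧ d.2 = N) ∧ m ∣ (d.2 - d.1 - 1) := by
  obtain ⟨⟨h1, h2, h3, h4, h5⟩, h6⟩ := h
  have hdvd : m ∣ d.2 - d.1 - 1 := by
    have := (Nat.modEq_iff_dvd' (by omega : 1 ≤ d.2 - d.1)).mp h6.symm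
    exact this
  have hlen := NCX.ge_of_dvd m (d.2 - d.1) hdvd h4
  refine ⟨h1, by omega, h3, ?_, hdvd⟩
  rintro ⟨e1, e2⟩
  exact h5 (by obtain ⟨a, b⟩ := d; simp_all)

lemma NCX.mdiag_intro {N m : ℕ} (a b : ℕ) (hm : 1 ≤ m) (h1 : 1 ≤ a) (h2 : a + m + 1 ≤ b)
    (h3 : b ≤ N) (h4 : ¬(a = 1 ∧ b = N)) (h5 : m ∣ b - a - 1) :
    IsMDiagonal N m (a, b) := by
  refine ⟨⟨h1, by omega, h3, by omega, ?_⟩, ?_⟩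
  · intro h
    exact h4 (by simpa [Prod.ext_iff] using h)
  · exact ((Nat.modEq_iff_dvd' (by omega : 1 ≤ b - a)).mpr (by simpa using h5)).symm

lemma NCX.exists_ear (m n : ℕ) (hm : 1 ≤ m) (hn : 2 ≤ n) (S : Finset (ℕ × ℕ))
    (hS : ∀ d ∈ S, IsMDiagonal (n * m + 2) m d)
    (hnc : ∀ d ∈ S, ∀ e ∈ S, ¬ DiagCross d e)
    (hmax : ∀ d, IsMDiagonal (n * m + 2) m d → (∀ e ∈ S, ¬ DiagCross d e) → d ∈ S) :
    ∃ d ∈ S, d.2 = d.1 + m + 1 := by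
  have hmn : 2 * m ≤ n * m := Nat.mul_le_mul_right m hn
  rcases S.eq_empty_or_nonempty with he | hne
  · subst he
    have hd : IsMDiagonal (n * m + 2) m (1, m + 2) :=
      NCX.mdiag_intro 1 (m + 2) hm (by omega) (by omega) (by omega) (by omega) ⟨1, by omega⟩
    have := hmax (1, m + 2) hd (by simp)
    simp at this
  · obtain ⟨d, hdS, hmin⟩ := S.exists_min_image (fun p => p.2 - p.1) hne
    by_cases hlen : d.2 = d.1 + m + 1
    · exact ⟨d, hdS, hlen⟩
    · exfalso
      obtain ⟨hd1, hd2, hd3, hd4, hd5⟩ := NCX.mdiag_facts (hS d hdS)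
      have hd6 : 2 * m + 1 ≤ d.2 - d.1 := NCX.ge2_of_dvd m _ hd5 (by omega)
      have hediag : IsMDiagonal (n * m + 2) m (d.1, d.1 + m + 1) :=
        NCX.mdiag_intro d.1 (d.1 + m + 1) hm hd1 (by omega) (by omega) (by omega) ⟨1, by omega⟩
      have hecross : ∀ g ∈ S, ¬ DiagCross (d.1, d.1 + m + 1) g := by
        intro g hg hcr
        obtain ⟨hg1, hg2, hg3, hg4, hg5⟩ := NCX.mdiag_facts (hS g hg)
        have h1 := hnc d hdS g hg
        have h2 := hnc g hg d hdS
        have h3 := hmin g hg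
        unfold DiagCross at hcr h1 h2
        simp only at hcr h1 h2
        omega
      have := hmin _ (hmax _ hediag hecross)
      simp at this
      omega

/-- squash map: delete the m vertices i+1,…,i+m -/
def NCX.sq (i m v : ℕ) : ℕ := if v ≤ i then v else v - m

/-- expand map: inverse of squash -/
def NCX.ex (i m v : ℕ) : ℕ := if v ≤ i then v else v + m

lemma NCX.sq_spec (i m v : ℕ) :
    (v ≤ i ∧ NCX.sq i m v = v) ∨ (i < v ∧ NCX.sq i m v = v - m) := by
  unfold NCX.sq; split_ifs with h
  · exact Or.inl ⟨h, rfl⟩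
  · exact Or.inr ⟨by omega, rfl⟩

lemma NCX.ex_spec (i m v : ℕ) :
    (v ≤ i ∧ NCX.ex i m v = v) ∨ (i < v ∧ NCX.ex i m v = v + m) := by
  unfold NCX.ex; split_ifs with h
  · exact Or.inl ⟨h, rfl⟩
  · exact Or.inr ⟨by omega, rfl⟩

set_option maxHeartbeats 1000000 in
lemma NCX.main (m : ℕ) (hm : 1 ≤ m) :
    ∀ n, 2 ≤ n → ∀ S : Finset (ℕ × ℕ),
      (∀ d ∈ S, IsMDiagonal (n * m + 2) m d) →
      (∀ d ∈ S, ∀ e ∈ S, ¬ DiagCross d e) →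
      (∀ d, IsMDiagonal (n * m + 2) m d → (∀ e ∈ S, ¬ DiagCross d e) → d ∈ S) →
      S.card = n - 1 := by
  refine Nat.le_induction ?_ ?_
  · -- base case n = 2
    intro S hS hnc hmax
    obtain ⟨d, hdS, hear⟩ := NCX.exists_ear m 2 hm le_rfl S hS hnc hmax
    have hsingle : S = {d} := by
      refine Finset.eq_singleton_iff_unique_mem.mpr ⟨hdS, ?_⟩
      intro g hg
      obtain ⟨hg1, hg2, hg3, hg4, hg5⟩ := NCX.mdiag_facts (hS g hg)
      obtain ⟨hd1, hd2, hd3, hd4, hd5⟩ := NCX.mdiag_facts (hS d hdS)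
      -- g has length exactly m+1
      have hglen : g.2 = g.1 + m + 1 := by
        by_contra hne
        have := NCX.ge2_of_dvd m (g.2 - g.1) hg5 (by omega)
        omega
      have h1 := hnc g hg d hdS
      have h2 := hnc d hdS g hg
      unfold DiagCross at h1 h2
      have : g.1 = d.1 ∧ g.2 = d.2 := by omega
      obtain ⟨a, b⟩ := g; obtain ⟨c, e⟩ := d; simp_all
    rw [hsingle]; simp
  · -- inductive step: n → n + 1
    intro n hn IH S hS hnc hmax
    have hexp : (n + 1) * m = n * m + m := by ring
    have hmn : 2 * m ≤ n * m := Nat.mul_le_mul_right m hn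
    obtain ⟨d, hdS, hear⟩ := NCX.exists_ear m (n + 1) hm (by omega) S hS hnc hmax
    obtain ⟨hd1, hd2, hd3, hd4, hd5⟩ := NCX.mdiag_facts (hS d hdS)
    -- endpoints of all diagonals in S avoid the open interval (d.1, d.1+m+1)
    have hD : ∀ g ∈ S, (g.1 ≤ d.1 ∨ d.1 + m + 1 ≤ g.1) ∧ (g.2 ≤ d.1 ∨ d.1 + m + 1 ≤ g.2) := by
      intro g hg
      obtain ⟨hg1, hg2, hg3, hg4, hg5⟩ := NCX.mdiag_facts (hS g hg)
      have h1 := hnc g hg d hdS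
      have h2 := hnc d hdS g hg
      unfold DiagCross at h1 h2
      omega
    have hcoord : ∀ g ∈ S, g ≠ d → ¬(g.1 = d.1 ∧ g.2 = d.2) := by
      intro g hg hgd hc
      exact hgd (by obtain ⟨a, b⟩ := g; obtain ⟨c, e⟩ := d; simp_all)
    -- length dichotomy
    have hlens : ∀ g ∈ S, g.2 - g.1 = m + 1 ∨ 2 * m + 1 ≤ g.2 - g.1 := by
      intro g hg
      obtain ⟨hg1, hg2, hg3, hg4, hg5⟩ := NCX.mdiag_facts (hS g hg)
      by_cases h : g.2 - g.1 = m + 1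
      · exact Or.inl h
      · exact Or.inr (NCX.ge2_of_dvd m _ hg5 (by omega))
    -- injectivity of φ on S.erase d
    have hinj : Set.InjOn (fun p : ℕ × ℕ => (NCX.sq d.1 m p.1, NCX.sq d.1 m p.2))
        (S.erase d) := by
      intro p hp q hq heq
      simp only [Finset.coe_erase, Set.mem_diff, Finset.mem_coe, Set.mem_singleton_iff]
        at hp hq
      obtain ⟨hpS, hpd⟩ := hp
      obtain ⟨hqS, hqd⟩ := hq
      have hDp := hD p hpS
      have hDq := hD q hqS
      simp only [Prod.mk.injEq] at heq
      obtain ⟨e1, e2⟩ := heq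
      have s1 := NCX.sq_spec d.1 m p.1
      have s2 := NCX.sq_spec d.1 m p.2
      have s3 := NCX.sq_spec d.1 m q.1
      have s4 := NCX.sq_spec d.1 m q.2
      have : p.1 = q.1 ∧ p.2 = q.2 := by omega
      obtain ⟨a, b⟩ := p; obtain ⟨c, e⟩ := q; simp_all
    have hmem' : ∀ d' ∈ (S.erase d).image
          (fun p : ℕ × ℕ => (NCX.sq d.1 m p.1, NCX.sq d.1 m p.2)),
        ∃ g ∈ S, g ≠ d ∧ d' = (NCX.sq d.1 m g.1, NCX.sq d.1 m g.2) := by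
      intro d' hd'
      obtain ⟨g, hg, hgd'⟩ := Finset.mem_image.mp hd'
      rw [Finset.mem_erase] at hg
      exact ⟨g, hg.2, hg.1, hgd'.symm⟩
    -- S' consists of m-diagonals of the smaller polygon
    have hS'diag : ∀ d' ∈ (S.erase d).image
          (fun p : ℕ × ℕ => (NCX.sq d.1 m p.1, NCX.sq d.1 m p.2)),
        IsMDiagonal (n * m + 2) m d' := by
      intro d' hd'
      obtain ⟨g, hgS, hgd, hgφ⟩ := hmem' d' hd'
      subst hgφ
      obtain ⟨hg1, hg2, hg3, hg4, hg5⟩ := NCX.mdiag_facts (hS g hgS)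
      have hDg := hD g hgS
      have s1 := NCX.sq_spec d.1 m g.1
      have s2 := NCX.sq_spec d.1 m g.2
      have hl := hlens g hgS
      have hc := hcoord g hgS hgd
      refine NCX.mdiag_intro _ _ hm (by omega) (by omega) (by omega) (by omega) ?_
      rcases s1 with ⟨u1, v1⟩ | ⟨u1, v1⟩ <;> rcases s2 with ⟨u2, v2⟩ | ⟨u2, v2⟩
      · rw [v1, v2]
        have heq : g.2 - g.1 - 1 = g.2 - g.1 - 1 := rfl
        exact hg5
      · have h' := Nat.dvd_sub hg5 (dvd_refl m)
        have heq : NCX.sq d.1 m g.2 - NCX.sq d.1 m g.1 - 1 = g.2 - g.1 - 1 - m := by omega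
        rw [heq]; exact h'
      · omega
      · have heq : NCX.sq d.1 m g.2 - NCX.sq d.1 m g.1 - 1 = g.2 - g.1 - 1 := by omega
        rw [heq]; exact hg5
    -- S' is pairwise non-crossing
    have hS'nc : ∀ d' ∈ (S.erase d).image
          (fun p : ℕ × ℕ => (NCX.sq d.1 m p.1, NCX.sq d.1 m p.2)),
        ∀ e' ∈ (S.erase d).image
          (fun p : ℕ × ℕ => (NCX.sq d.1 m p.1, NCX.sq d.1 m p.2)),
        ¬ DiagCross d' e' := by
      intro d' hd' e' he' hcr
      obtain ⟨g, hgS, hgd, hgφ⟩ := hmem' d' hd'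
      obtain ⟨h', hhS, hhd, hhφ⟩ := hmem' e' he'
      subst hgφ; subst hhφ
      have hncgh := hnc g hgS h' hhS
      obtain ⟨hg1, hg2, hg3, hg4, hg5⟩ := NCX.mdiag_facts (hS g hgS)
      obtain ⟨hh1, hh2, hh3, hh4, hh5⟩ := NCX.mdiag_facts (hS h' hhS)
      have hDg := hD g hgS
      have hDh := hD h' hhS
      have s1 := NCX.sq_spec d.1 m g.1
      have s2 := NCX.sq_spec d.1 m g.2
      have s3 := NCX.sq_spec d.1 m h'.1
      have s4 := NCX.sq_spec d.1 m h'.2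
      unfold DiagCross at hcr hncgh
      simp only at hcr
      omega
    -- maximality transfers to S'
    have hS'max : ∀ d', IsMDiagonal (n * m + 2) m d' →
        (∀ e' ∈ (S.erase d).image
          (fun p : ℕ × ℕ => (NCX.sq d.1 m p.1, NCX.sq d.1 m p.2)), ¬ DiagCross d' e') →
        d' ∈ (S.erase d).image
          (fun p : ℕ × ℕ => (NCX.sq d.1 m p.1, NCX.sq d.1 m p.2)) := by
      intro d' hd'diag hd'nc
      obtain ⟨hp1, hp2, hp3, hp4, hp5⟩ := NCX.mdiag_facts hd'diag
      have t1 := NCX.ex_spec d.1 m d'.1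
      have t2 := NCX.ex_spec d.1 m d'.2
      have hediag : IsMDiagonal ((n + 1) * m + 2) m (NCX.ex d.1 m d'.1, NCX.ex d.1 m d'.2) := by
        refine NCX.mdiag_intro _ _ hm (by omega) (by omega) (by omega) (by omega) ?_
        rcases t1 with ⟨u1, v1⟩ | ⟨u1, v1⟩ <;> rcases t2 with ⟨u2, v2⟩ | ⟨u2, v2⟩
        · have heq : NCX.ex d.1 m d'.2 - NCX.ex d.1 m d'.1 - 1 = d'.2 - d'.1 - 1 := by omega
          rw [heq]; exact hp5
        · have h' := dvd_add hp5 (dvd_refl m)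
          have heq : NCX.ex d.1 m d'.2 - NCX.ex d.1 m d'.1 - 1 = d'.2 - d'.1 - 1 + m := by
            omega
          rw [heq]; exact h'
        · omega
        · have heq : NCX.ex d.1 m d'.2 - NCX.ex d.1 m d'.1 - 1 = d'.2 - d'.1 - 1 := by omega
          rw [heq]; exact hp5
      have hecross : ∀ g ∈ S, ¬ DiagCross (NCX.ex d.1 m d'.1, NCX.ex d.1 m d'.2) g := by
        intro g hg hcr
        by_cases hgd : g = d
        · subst hgd
          unfold DiagCross at hcr
          simp only at hcr
          omega
        · have hgS' : (NCX.sq d.1 m g.1, NCX.sq d.1 m g.2) ∈ (S.erase d).image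
              (fun p : ℕ × ℕ => (NCX.sq d.1 m p.1, NCX.sq d.1 m p.2)) :=
            Finset.mem_image_of_mem _ (Finset.mem_erase.mpr ⟨hgd, hg⟩)
          have hnc2 := hd'nc _ hgS'
          obtain ⟨hg1, hg2, hg3, hg4, hg5⟩ := NCX.mdiag_facts (hS g hg)
          have hDg := hD g hg
          have s1 := NCX.sq_spec d.1 m g.1
          have s2 := NCX.sq_spec d.1 m g.2
          unfold DiagCross at hcr hnc2
          simp only at hcr hnc2
          omega
      have heS : (NCX.ex d.1 m d'.1, NCX.ex d.1 m d'.2) ∈ S :=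
        hmax _ hediag hecross
      have hed : (NCX.ex d.1 m d'.1, NCX.ex d.1 m d'.2) ≠ d := by
        intro h
        have e1 : NCX.ex d.1 m d'.1 = d.1 := congrArg Prod.fst h
        have e2 : NCX.ex d.1 m d'.2 = d.2 := congrArg Prod.snd h
        omega
      have hmem2 : (NCX.sq d.1 m (NCX.ex d.1 m d'.1), NCX.sq d.1 m (NCX.ex d.1 m d'.2))
          ∈ (S.erase d).image (fun p : ℕ × ℕ => (NCX.sq d.1 m p.1, NCX.sq d.1 m p.2)) :=
        Finset.mem_image_of_mem _ (Finset.mem_erase.mpr ⟨hed, heS⟩)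
      have q1 := NCX.sq_spec d.1 m (NCX.ex d.1 m d'.1)
      have q2 := NCX.sq_spec d.1 m (NCX.ex d.1 m d'.2)
      have hback : (NCX.sq d.1 m (NCX.ex d.1 m d'.1), NCX.sq d.1 m (NCX.ex d.1 m d'.2)) = d' := by
        have hh : NCX.sq d.1 m (NCX.ex d.1 m d'.1) = d'.1 ∧
            NCX.sq d.1 m (NCX.ex d.1 m d'.2) = d'.2 := by omega
        obtain ⟨c, e⟩ := d'
        simp only [Prod.mk.injEq]
        exact hh
      rwa [hback] at hmem2
    have hcard' := IH _ hS'diag hS'nc hS'max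
    have hcard2 : ((S.erase d).image
          (fun p : ℕ × ℕ => (NCX.sq d.1 m p.1, NCX.sq d.1 m p.2))).card
        = (S.erase d).card := Finset.card_image_of_injOn hinj
    have hcard3 : (S.erase d).card = S.card - 1 := Finset.card_erase_of_mem hdS
    have hpos : 1 ≤ S.card := Finset.card_pos.mpr ⟨d, hdS⟩
    omega


/-- Every inclusion-maximal set of pairwise non-crossing `m`-diagonals of a convex
`(nm+2)`-gon has cardinality exactly `n - 1`. -/
theorem maximal_noncrossing_mDiagonals_card (n m : ℕ) (hn : 2 ≤ n) (hm : 1 ≤ m)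
    (S : Finset (ℕ × ℕ))
    (hS : ∀ d ∈ S, IsMDiagonal (n * m + 2) m d)
    (hnc : ∀ d ∈ S, ∀ e ∈ S, ¬ DiagCross d e)
    (hmax : ∀ d, IsMDiagonal (n * m + 2) m d → (∀ e ∈ S, ¬ DiagCross d e) → d ∈ S) :
    S.card = n - 1 := by
  exact NCX.main m hm n hn S hS hnc hmax
end

section
/- The pair (Γ(n,m), τ_m) is a stable translation quiver: τ_m maps the set of m-diagonals bijectively onto itself, and for any two m-diagonals x and y there is an arrow x → y in Γ(n,m) if and only if there is an arrow τ_m(y) → x in Γ(n,m). -/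
/-- A diagonal of the convex `N`-gon whose vertices are labelled by `ZMod N`:
an unordered pair `{i, j}` with `j ∉ {i - 1, i, i + 1}`. -/
def IsDiag (N : ℕ) (d : Sym2 (ZMod N)) : Prop :=
  ∃ i j : ZMod N, d = s(i, j) ∧ j ≠ i - 1 ∧ j ≠ i ∧ j ≠ i + 1

/-- An `m`-diagonal of the `N`-gon (`N = nm + 2`): a diagonal `{i, j}` with
`j - i ≡ 1 (mod m)` (a condition symmetric in `i` and `j` since `N ≡ 2 (mod m)`). -/
def IsMDiag (N m : ℕ) (d : Sym2 (ZMod N)) : Prop :=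
  ∃ i j : ZMod N, d = s(i, j) ∧ j ≠ i - 1 ∧ j ≠ i ∧ j ≠ i + 1 ∧ (j - i).val ≡ 1 [MOD m]

/-- The translation `τ_m` sending `{i, j}` to `{i - m, j - m}`
(anticlockwise rotation through `m` steps). -/
def tauRot (N m : ℕ) (d : Sym2 (ZMod N)) : Sym2 (ZMod N) :=
  Sym2.map (fun i => i - (m : ZMod N)) d

/-- Arrows of the quiver `Γ(n, m)` of `m`-diagonals: `{i, j} → {i, j + m}` and
`{i, j} → {i + m, j}` whenever the target pair is again an (`m`-)diagonal. -/
def ArrowG (N m : ℕ) (d d' : Sym2 (ZMod N)) : Prop :=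
  IsMDiag N m d ∧ IsMDiag N m d' ∧
    ∃ i j : ZMod N, d = s(i, j) ∧
      (d' = s(i, j + (m : ZMod N)) ∨ d' = s(i + (m : ZMod N), j))

/-- Arrows of the quiver `Γ(nm, 1)` of all diagonals of the `N`-gon:
`{i, j} → {i, j + 1}` and `{i, j} → {i + 1, j}` whenever the target pair
is again a diagonal. -/
def Arrow1 (N : ℕ) (d d' : Sym2 (ZMod N)) : Prop :=
  IsDiag N d ∧ IsDiag N d' ∧
    ∃ i j : ZMod N, d = s(i, j) ∧ (d' = s(i, j + 1) ∨ d' = s(i + 1, j))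

/-- `p 0 → p 1 → ⋯ → p m` is a sectional path of length `m` in `Γ(nm, 1)`:
each step is an arrow, and `τ (p (k+1)) ≠ p (k-1)` for `1 ≤ k ≤ m - 1`,
where `τ = tauRot N 1` is the translation `{i, j} ↦ {i - 1, j - 1}`. -/
def IsSectionalPath (N m : ℕ) (p : ℕ → Sym2 (ZMod N)) : Prop :=
  (∀ k, k < m → Arrow1 N (p k) (p (k + 1))) ∧
    (∀ k, 1 ≤ k → k < m → tauRot N 1 (p (k + 1)) ≠ p (k - 1))

/-- Arrows of the `m`-th power `(Γ(nm, 1))^m`: sectional paths of length `m`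
in `Γ(nm, 1)`. -/
def ArrowP (N m : ℕ) (d d' : Sym2 (ZMod N)) : Prop :=
  ∃ p : ℕ → Sym2 (ZMod N), IsSectionalPath N m p ∧ p 0 = d ∧ p m = d'


lemma tau_mdiag (N m : ℕ) (d : Sym2 (ZMod N)) (h : IsMDiag N m d) :
    IsMDiag N m (tauRot N m d) := by
  obtain ⟨i, j, rfl, h1, h2, h3, h4⟩ := h
  refine ⟨i - m, j - m, by simp [tauRot, Sym2.map_pair_eq], ?_, ?_, ?_, ?_⟩
  · intro h; apply h1; have : j - m = i - 1 - m := by rw [h]; ring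
    exact sub_left_injective this
  · intro h; exact h2 (by have := sub_left_injective h; exact this)
  · intro h; apply h3; have : j - m = i + 1 - m := by rw [h]; ring
    exact sub_left_injective this
  · have : j - m - (i - m) = j - i := by ring
    rw [this]; exact h4

lemma sigma_mdiag (N m : ℕ) (d : Sym2 (ZMod N)) (h : IsMDiag N m d) :
    IsMDiag N m (Sym2.map (fun i => i + (m : ZMod N)) d) := by
  obtain ⟨i, j, rfl, h1, h2, h3, h4⟩ := h
  refine ⟨i + m, j + m, by simp [Sym2.map_pair_eq], ?_, ?_, ?_, ?_⟩
  · intro h; apply h1; have : j + m = i - 1 + m := by rw [h]; ring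
    exact add_left_injective _ this
  · intro h; exact h2 (add_left_injective _ h)
  · intro h; apply h3; have : j + m = i + 1 + m := by rw [h]; ring
    exact add_left_injective _ this
  · have : j + m - (i + m) = j - i := by ring
    rw [this]; exact h4

lemma tau_sigma (N m : ℕ) (d : Sym2 (ZMod N)) :
    tauRot N m (Sym2.map (fun i => i + (m : ZMod N)) d) = d := by
  simp only [tauRot, Sym2.map_map]
  have : ((fun i => i - (m : ZMod N)) ∘ fun i => i + (m : ZMod N)) = id := by
    funext x; simp
  rw [this, Sym2.map_id]; rfl

lemma sigma_tau (N m : ℕ) (d : Sym2 (ZMod N)) :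
    Sym2.map (fun i => i + (m : ZMod N)) (tauRot N m d) = d := by
  simp only [tauRot, Sym2.map_map]
  have : ((fun i => i + (m : ZMod N)) ∘ fun i => i - (m : ZMod N)) = id := by
    funext x; simp
  rw [this, Sym2.map_id]; rfl

/-- `(Γ(n,m), τ_m)` is a stable translation quiver: `τ_m` maps the set of
`m`-diagonals bijectively onto itself, and for any two `m`-diagonals `x`, `y`
there is an arrow `x → y` in `Γ(n,m)` iff there is an arrow `τ_m y → x`. -/
theorem gammaNM_stable_translation_quiver (n m : ℕ) (hn : 2 ≤ n) (hm : 1 ≤ m) :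
    Set.BijOn (tauRot (n * m + 2) m)
      {d | IsMDiag (n * m + 2) m d} {d | IsMDiag (n * m + 2) m d} ∧
    ∀ x y : Sym2 (ZMod (n * m + 2)),
      IsMDiag (n * m + 2) m x → IsMDiag (n * m + 2) m y →
        (ArrowG (n * m + 2) m x y ↔ ArrowG (n * m + 2) m (tauRot (n * m + 2) m y) x) := by
  set N := n * m + 2
  constructor
  · refine ⟨fun d hd => tau_mdiag N m d hd, ?_, ?_⟩
    · intro a _ b _ hab
      have : Function.Injective (fun i : ZMod N => i - (m : ZMod N)) := by
        intro x y h; exact sub_left_injective h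
      exact Sym2.map.injective this hab
    · intro d hd
      exact ⟨Sym2.map (fun i => i + (m : ZMod N)) d, sigma_mdiag N m d hd,
        tau_sigma N m d⟩
  · intro x y hx hy
    constructor
    · rintro ⟨_, _, i, j, hxe, hc | hc⟩
      · refine ⟨tau_mdiag N m y hy, hx, i - m, j, ?_, Or.inr ?_⟩
        · rw [hc]; simp [tauRot, Sym2.map_pair_eq]
        · rw [hxe]; congr 1; ring
      · refine ⟨tau_mdiag N m y hy, hx, i, j - m, ?_, Or.inl ?_⟩
        · rw [hc]; simp [tauRot, Sym2.map_pair_eq]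
        · rw [hxe]; congr 1; ring
    · rintro ⟨_, _, a, b, htye, hc | hc⟩
      · have hye : y = s(a + m, b + m) := by
          rw [← sigma_tau N m y, htye, Sym2.map_pair_eq]
        refine ⟨hx, hy, b + m, a, ?_, Or.inl ?_⟩
        · rw [hc, Sym2.eq_swap]
        · rw [hye, Sym2.eq_swap]
      · have hye : y = s(a + m, b + m) := by
          rw [← sigma_tau N m y, htye, Sym2.map_pair_eq]
        refine ⟨hx, hy, a + m, b, hc, Or.inl hye⟩
end

section
/- Sectional paths of length m in Γ(nm,1) preserve the property of being an m-diagonal: if x₀ → x₁ → ⋯ → x_m is a sectional path in Γ(nm,1), then x₀ is an m-diagonal if and only if x_m is an m-diagonal. -/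
/-! ### Auxiliary machinery -/

/-- Unordered-pair form of the diagonal condition. -/
def Dg (N : ℕ) (i j : ZMod N) : Prop := j ≠ i - 1 ∧ j ≠ i ∧ j ≠ i + 1

lemma Dg.symm {N : ℕ} {i j : ZMod N} (h : Dg N i j) : Dg N j i := by
  obtain ⟨h1, h2, h3⟩ := h
  refine ⟨fun h => h3 ?_, fun h => h2 h.symm, fun h => h1 ?_⟩
  · rw [h]; ring
  · rw [h]; ring

lemma isDiag_rep {N : ℕ} {d : Sym2 (ZMod N)} {i j : ZMod N}
    (hd : IsDiag N d) (heq : d = s(i, j)) : Dg N i j := by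
  obtain ⟨a, b, hab, c1, c2, c3⟩ := hd
  rcases Sym2.eq_iff.mp (hab.symm.trans heq) with ⟨ha, hb⟩ | ⟨ha, hb⟩
  · subst ha; subst hb; exact ⟨c1, c2, c3⟩
  · subst ha; subst hb; exact Dg.symm ⟨c1, c2, c3⟩

lemma val_step {N : ℕ} (hN : 2 ≤ N) {i j : ZMod N} (h1 : Dg N i j) :
    (j + 1 - i).val = (j - i).val + 1 := by
  haveI : NeZero N := ⟨by omega⟩
  haveI : Fact (1 < N) := ⟨by omega⟩
  have hlt : (j - i).val < N := ZMod.val_lt _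
  have hne : (j - i).val ≠ N - 1 := by
    intro h
    apply h1.1
    have hv : ((j - i).val : ZMod N) = j - i := ZMod.natCast_zmod_val _
    rw [h] at hv
    have hcast : ((N - 1 : ℕ) : ZMod N) = -1 := by
      push_cast [Nat.cast_sub (by omega : 1 ≤ N)]
      simp
    rw [hcast] at hv
    have hj : j = -1 + i := sub_eq_iff_eq_add.mp hv.symm
    rw [hj]; ring
  have heq : j + 1 - i = (j - i) + 1 := by ring
  rw [heq, ZMod.val_add_of_lt, ZMod.val_one]
  rw [ZMod.val_one]; omega

lemma modeq_symm {N m : ℕ} (hN : 2 ≤ N) (hmod : 2 ≡ N [MOD m]) {i j : ZMod N}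
    (hij : j ≠ i) (h : (j - i).val ≡ 1 [MOD m]) : (i - j).val ≡ 1 [MOD m] := by
  haveI : NeZero N := ⟨by omega⟩
  have hx : j - i ≠ 0 := sub_ne_zero.mpr hij
  have hval : (i - j).val = N - (j - i).val := by
    have hneg : i - j = -(j - i) := by ring
    rw [hneg, ZMod.neg_val, if_neg hx]
  rw [hval]
  have hle : (j - i).val ≤ N := le_of_lt (ZMod.val_lt _)
  have key : (N - (j - i).val) + (j - i).val = N := Nat.sub_add_cancel hle
  have h2 : (N - (j - i).val) + (j - i).val ≡ 1 + (j - i).val [MOD m] := by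
    rw [key]
    calc N ≡ 2 [MOD m] := hmod.symm
      _ = 1 + 1 := rfl
      _ ≡ 1 + (j - i).val [MOD m] := Nat.ModEq.add_left 1 h.symm
  exact Nat.ModEq.add_right_cancel' _ h2

lemma mdiag_iff {N m : ℕ} (hN : 2 ≤ N) (hmod : 2 ≡ N [MOD m]) {i j : ZMod N}
    (hd : Dg N i j) (d : Sym2 (ZMod N)) (heq : d = s(i, j)) :
    IsMDiag N m d ↔ (j - i).val ≡ 1 [MOD m] := by
  constructor
  · rintro ⟨a, b, hab, c1, c2, c3, c4⟩
    rcases Sym2.eq_iff.mp (hab.symm.trans heq) with ⟨ha, hb⟩ | ⟨ha, hb⟩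
    · subst ha; subst hb; exact c4
    · subst ha; subst hb
      exact modeq_symm hN hmod (fun h => hd.2.1 h.symm) c4
  · intro h; exact ⟨i, j, heq, hd.1, hd.2.1, hd.2.2, h⟩

/-- Along a sectional path, one endpoint stays fixed and the other advances by 1
at each step. -/
lemma path_rep {N m : ℕ} (hm : 1 ≤ m) (p : ℕ → Sym2 (ZMod N))
    (hp : IsSectionalPath N m p) :
    ∃ i j : ZMod N, ∀ k ≤ m, p k = s(i, j + (k : ZMod N)) := by
  have key : ∀ t, t ≤ m → ∃ i j : ZMod N, ∀ k ≤ t, p k = s(i, j + (k : ZMod N)) := by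
    intro t
    induction t with
    | zero =>
      intro _
      obtain ⟨hd, -, -⟩ := hp.1 0 hm
      obtain ⟨i, j, heq, -, -, -⟩ := hd
      refine ⟨i, j, fun k hk => ?_⟩
      interval_cases k
      simpa using heq
    | succ t ih =>
      intro ht1
      obtain ⟨i, j, hrep⟩ := ih (by omega)
      obtain ⟨hd, hd', i', j', heq', hor⟩ := hp.1 t (by omega)
      have hpt : p t = s(i, j + (t : ZMod N)) := hrep t le_rfl
      have hcase : p (t + 1) = s(i, j + (t : ZMod N) + 1) ∨
          p (t + 1) = s(i + 1, j + (t : ZMod N)) := by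
        rcases Sym2.eq_iff.mp (heq'.symm.trans hpt) with ⟨ha, hb⟩ | ⟨ha, hb⟩
        · subst ha; subst hb
          rcases hor with h | h
          · exact Or.inl h
          · exact Or.inr h
        · subst ha; subst hb
          rcases hor with h | h
          · right; rw [h]; exact Sym2.eq_swap
          · left; rw [h]; exact Sym2.eq_swap
      rcases hcase with hgood | hbad
      · refine ⟨i, j, fun k hk => ?_⟩
        rcases Nat.lt_or_ge k (t + 1) with h | h
        · exact hrep k (by omega)
        · have hk1 : k = t + 1 := by omega
          subst hk1
          rw [hgood]
          congr 1
          push_cast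
          ring
      · rcases Nat.eq_zero_or_pos t with rfl | htpos
        · simp only [Nat.cast_zero, add_zero] at hbad hpt
          refine ⟨j, i, fun k hk => ?_⟩
          interval_cases k
          · rw [hpt]
            have : i + ((0 : ℕ) : ZMod N) = i := by push_cast; ring
            rw [this]
            exact Sym2.eq_swap
          · rw [hbad]
            have : i + ((1 : ℕ) : ZMod N) = i + 1 := by push_cast; ring
            rw [this]
            exact Sym2.eq_swap
        · exfalso
          apply hp.2 t htpos (by omega)
          rw [hbad, hrep (t - 1) (by omega)]
          simp only [tauRot, Sym2.map_pair_eq]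
          apply Sym2.eq_iff.mpr
          left
          constructor
          · push_cast; ring
          · rw [Nat.cast_sub htpos]
            push_cast
            ring
  obtain ⟨i, j, h⟩ := key m le_rfl
  exact ⟨i, j, h⟩

/-- Sectional paths of length `m` in `Γ(nm, 1)` preserve the property of being an
`m`-diagonal: if `p 0 → p 1 → ⋯ → p m` is a sectional path in `Γ(nm, 1)`, then
`p 0` is an `m`-diagonal iff `p m` is an `m`-diagonal. -/
theorem sectionalPath_preserves_mDiag (n m : ℕ) (hn : 2 ≤ n) (hm : 1 ≤ m)
    (p : ℕ → Sym2 (ZMod (n * m + 2)))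
    (hp : IsSectionalPath (n * m + 2) m p) :
    IsMDiag (n * m + 2) m (p 0) ↔ IsMDiag (n * m + 2) m (p m) := by
  have hN : 2 ≤ n * m + 2 := by omega
  have hmod : 2 ≡ n * m + 2 [MOD m] := by
    rw [Nat.modEq_iff_dvd' (by omega)]
    have h2 : n * m + 2 - 2 = n * m := by omega
    rw [h2]
    exact dvd_mul_left m n
  obtain ⟨i, j, hrep⟩ := path_rep hm p hp
  have hdiag : ∀ k, k ≤ m → Dg (n * m + 2) i (j + (k : ZMod (n * m + 2))) := by
    intro k hk
    rcases Nat.lt_or_ge k m with h | h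
    · exact isDiag_rep (hp.1 k h).1 (hrep k hk)
    · have hkm : k = m := by omega
      subst hkm
      refine isDiag_rep (hp.1 (k - 1) (by omega)).2.1 ?_
      have h1 : k - 1 + 1 = k := by omega
      rw [h1]
      exact hrep k le_rfl
  have hval : ∀ k, k ≤ m → (j + (k : ZMod (n * m + 2)) - i).val = (j - i).val + k := by
    intro k
    induction k with
    | zero => intro _; simp
    | succ k ih =>
      intro hk
      have h1 := hdiag k (by omega)
      have hc : (((k + 1 : ℕ)) : ZMod (n * m + 2)) = (k : ZMod (n * m + 2)) + 1 := by push_cast; ring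
      rw [hc, ← add_assoc, val_step hN h1, ih (by omega)]
      omega
  have h0 : p 0 = s(i, j) := by
    have := hrep 0 (by omega)
    simpa using this
  have hM : p m = s(i, j + (m : ZMod (n * m + 2))) := hrep m le_rfl
  have hd0 : Dg (n * m + 2) i j := by
    have := hdiag 0 (by omega)
    simpa using this
  have hdm : Dg (n * m + 2) i (j + (m : ZMod (n * m + 2))) := hdiag m le_rfl
  rw [mdiag_iff hN hmod hd0 _ h0, mdiag_iff hN hmod hdm _ hM, hval m le_rfl]
  have hmm : (j - i).val + m ≡ (j - i).val [MOD m] := by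
    unfold Nat.ModEq
    exact Nat.add_mod_right _ _
  exact ⟨fun h => hmm.trans h, fun h => hmm.symm.trans h⟩
end

section
/- For m-diagonals d and d' of the (nm+2)-gon, there exists a sectional path of length m from d to d' in Γ(nm,1) if and only if there is an arrow d → d' in Γ(n,m), i.e. if and only if d = {i,j} and d' = {i, j+m} or d' = {i+m, j} with d' a diagonal. -/
lemma val_sub_eq_iff {N : ℕ} [NeZero N] (a b : ZMod N) (c : ℕ) (hc : c < N) :
    (b - a).val = c ↔ b = a + (c : ZMod N) := by
  constructor
  · intro h
    have h2 : ((b - a).val : ZMod N) = (c : ZMod N) := by rw [h]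
    rw [ZMod.natCast_val, ZMod.cast_id] at h2
    rw [← h2]; ring
  · intro h
    rw [h]
    have h2 : a + (c:ZMod N) - a = (c : ZMod N) := by ring
    rw [h2, ZMod.val_cast_of_lt hc]

lemma arrow1_step {N : ℕ} {x y : Sym2 (ZMod N)} {a b : ZMod N}
    (h : Arrow1 N x y) (hx : x = s(a, b)) :
    y = s(a, b + 1) ∨ y = s(a + 1, b) := by
  obtain ⟨-, -, i, j, hij, hy⟩ := h
  rw [hx] at hij
  rcases Sym2.eq_iff.mp hij with ⟨rfl, rfl⟩ | ⟨rfl, rfl⟩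
  · exact hy
  · rcases hy with h | h
    · exact Or.inr (by rw [h, Sym2.eq_swap])
    · exact Or.inl (by rw [h, Sym2.eq_swap])

lemma tauRot_pair {N : ℕ} (a b : ZMod N) :
    tauRot N 1 s(a, b) = s(a - 1, b - 1) := by
  simp [tauRot]

lemma sectional_line {N m : ℕ} {p : ℕ → Sym2 (ZMod N)} (hp : IsSectionalPath N m p)
    {i j : ZMod N} (h0 : p 0 = s(i, j)) (h1 : p 1 = s(i, j + 1)) :
    ∀ k, k ≤ m → p k = s(i, j + (k : ZMod N)) := by
  intro k
  induction k using Nat.strong_induction_on with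
  | _ k ih =>
    intro hk
    match k with
    | 0 => simpa using h0
    | 1 => simpa using h1
    | (K+2) =>
      have hK : p K = s(i, j + (K : ZMod N)) := ih K (by omega) (by omega)
      have hK1 : p (K+1) = s(i, j + ((K+1 : ℕ) : ZMod N)) := ih (K+1) (by omega) (by omega)
      have ha := hp.1 (K+1) (by omega)
      rcases arrow1_step ha hK1 with h | h
      · rw [h]
        have : j + ((K+1 : ℕ) : ZMod N) + 1 = j + ((K+2 : ℕ) : ZMod N) := by
          push_cast; ring
        rw [this]
      · exfalso
        apply hp.2 (K+1) (by omega) (by omega)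
        show tauRot N 1 (p (K+2)) = p K
        rw [h, tauRot_pair, hK]
        have e1 : i + 1 - 1 = i := by ring
        have e2 : j + ((K+1 : ℕ) : ZMod N) - 1 = j + (K : ZMod N) := by
          push_cast; ring
        rw [e1, e2]

lemma mdiag_elim {n m : ℕ} (hm : 1 ≤ m) {i j : ZMod (n*m+2)}
    (h : IsMDiag (n*m+2) m s(i,j)) :
    j ≠ i - 1 ∧ j ≠ i ∧ j ≠ i + 1 ∧ ((j - i).val ≡ 1 [MOD m]) := by
  haveI : NeZero (n*m+2) := ⟨by omega⟩
  obtain ⟨a, b, hab, h1, h2, h3, h4⟩ := h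
  rcases Sym2.eq_iff.mp hab with ⟨rfl, rfl⟩ | ⟨rfl, rfl⟩
  · exact ⟨h1, h2, h3, h4⟩
  · refine ⟨fun hh => h3 (by rw [hh]; ring), fun hh => h2 (by rw [hh]),
      fun hh => h1 (by rw [hh]; ring), ?_⟩
    have hne : i - j ≠ 0 := sub_ne_zero.mpr h2
    have hji : j - i = -(i - j) := by ring
    rw [hji, ZMod.neg_val, if_neg hne]
    have hv : (i - j).val < n*m+2 := ZMod.val_lt _
    have hN : 2 ≡ n*m+2 [MOD m] :=
      (Nat.modEq_iff_dvd' (by omega)).mpr ⟨n, by rw [Nat.add_sub_cancel, Nat.mul_comm]⟩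
    apply Nat.ModEq.add_right_cancel' ((i - j).val)
    rw [Nat.sub_add_cancel hv.le]
    calc n*m+2 ≡ 2 [MOD m] := hN.symm
      _ = 1 + 1 := rfl
      _ ≡ 1 + (i-j).val [MOD m] := Nat.ModEq.add_left 1 h4.symm

lemma build_path {n m : ℕ} (hn : 2 ≤ n) (hm : 1 ≤ m) (i j : ZMod (n*m+2))
    (hij : IsMDiag (n*m+2) m s(i,j))
    (hd' : IsMDiag (n*m+2) m s(i, j + (m : ZMod (n*m+2)))) :
    ArrowP (n*m+2) m s(i,j) (s(i, j + (m : ZMod (n*m+2)))) := by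
  haveI : NeZero (n*m+2) := ⟨by omega⟩
  haveI : Fact (1 < n*m+2) := ⟨by omega⟩
  obtain ⟨h1, h2, h3, h4⟩ := mdiag_elim hm hij
  obtain ⟨h1', h2', h3', -⟩ := mdiag_elim hm hd'
  have hvlt : (j - i).val < n*m+2 := ZMod.val_lt _
  have hv0 : (j - i).val ≠ 0 := fun hh => h2 (by
    have := (val_sub_eq_iff i j 0 (by omega)).mp hh; simpa using this)
  have hv1 : (j - i).val ≠ 1 := fun hh => h3 (by
    have := (val_sub_eq_iff i j 1 (by omega)).mp hh; simpa using this)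
  have hcastN1 : ((n*m+2 - 1 : ℕ) : ZMod (n*m+2)) = -1 := by
    have h5 : ((n*m+2 - 1 : ℕ) : ZMod (n*m+2)) = ((n*m+2 : ℕ) : ZMod (n*m+2)) - 1 := by
      rw [Nat.cast_sub (by omega)]; simp
    rw [h5, ZMod.natCast_self]; ring
  have hvN1 : (j - i).val ≠ n*m+1 := fun hh => h1 (by
    have h5 : (j - i).val = n*m+2 - 1 := by omega
    have := (val_sub_eq_iff i j (n*m+2-1) (by omega)).mp h5
    rw [hcastN1] at this
    rw [this]; ring)
  have hv2 : 2 ≤ (j - i).val := by omega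
  obtain ⟨q, hq⟩ := (Nat.modEq_iff_dvd' (by omega : 1 ≤ (j - i).val)).mp h4.symm
  have hvq : (j - i).val = m * q + 1 := by omega
  have hq1 : 1 ≤ q := by
    rcases Nat.eq_zero_or_pos q with rfl | h
    · simp at hvq; omega
    · exact h
  have hmul : n * m = m * n := Nat.mul_comm n m
  have hqn : q < n := by
    have h5 : m * q < m * n := by omega
    exact Nat.lt_of_mul_lt_mul_left h5
  have hq1n : m * (q+1) ≤ m * n := Nat.mul_le_mul_left m hqn
  have hq1eq : m * (q+1) = m * q + m := by ring
  have hji : j = i + ((j - i).val : ZMod (n*m+2)) := (val_sub_eq_iff i j _ hvlt).mp rfl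
  have hvm : ∀ k, k ≤ m → ((j + (k : ZMod (n*m+2))) - i).val = (j - i).val + k := by
    intro k hk
    apply (val_sub_eq_iff i (j + (k : ZMod (n*m+2))) _ (by omega)).mpr
    push_cast [ZMod.natCast_val, ZMod.cast_id]
    ring
  have hvmN1 : (j - i).val + m ≠ n*m+1 := by
    intro hh
    apply h1'
    have hval : ((j + (m : ZMod (n*m+2))) - i).val = n*m+2 - 1 := by
      rw [hvm m le_rfl]; omega
    have h5 := (val_sub_eq_iff i (j + (m : ZMod (n*m+2))) (n*m+2-1) (by omega)).mp hval
    rw [hcastN1] at h5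
    rw [h5]; ring
  have hvbound : (j - i).val + m ≤ n*m := by omega
  have hdiag : ∀ k, k ≤ m → IsDiag (n*m+2) s(i, j + (k : ZMod (n*m+2))) := by
    intro k hk
    have hv := hvm k hk
    refine ⟨i, j + (k : ZMod (n*m+2)), rfl, ?_, ?_, ?_⟩
    · intro hh
      have h5 : ((j + (k : ZMod (n*m+2))) - i).val = n*m+2-1 := by
        apply (val_sub_eq_iff _ _ _ (by omega)).mpr
        rw [hh, hcastN1]; ring
      omega
    · intro hh
      have h5 : ((j + (k : ZMod (n*m+2))) - i).val = 0 := by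
        apply (val_sub_eq_iff _ _ _ (by omega)).mpr
        rw [hh]; simp
      omega
    · intro hh
      have h5 : ((j + (k : ZMod (n*m+2))) - i).val = 1 := by
        apply (val_sub_eq_iff _ _ _ (by omega)).mpr
        rw [hh]; simp
      omega
  refine ⟨fun k => s(i, j + (k : ZMod (n*m+2))), ⟨?_, ?_⟩, by simp, rfl⟩
  · intro k hk
    refine ⟨hdiag k (by omega), hdiag (k+1) (by omega), i, j + (k : ZMod (n*m+2)), rfl,
      Or.inl ?_⟩
    show s(i, j + (((k+1) : ℕ) : ZMod (n*m+2))) = s(i, j + ((k : ℕ) : ZMod (n*m+2)) + 1)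
    have : j + (((k+1) : ℕ) : ZMod (n*m+2)) = j + ((k : ℕ) : ZMod (n*m+2)) + 1 := by
      push_cast; ring
    rw [this]
  · intro k hk1 hk2
    show tauRot (n*m+2) 1 s(i, j + (((k+1) : ℕ) : ZMod (n*m+2))) ≠
      s(i, j + (((k-1) : ℕ) : ZMod (n*m+2)))
    rw [tauRot_pair]
    intro hh
    rcases Sym2.eq_iff.mp hh with ⟨he, -⟩ | ⟨-, he⟩
    · exact one_ne_zero (sub_eq_self.mp he)
    · -- he : j + ↑(k+1) - 1 = i
      have e2 : j + (((k+1) : ℕ) : ZMod (n*m+2)) - 1 = j + ((k : ℕ) : ZMod (n*m+2)) := by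
        push_cast; ring
      rw [e2] at he
      have h5 := hvm k (by omega)
      rw [he] at h5
      simp at h5
      omega

/-- For `m`-diagonals `d`, `d'` of the `(nm+2)`-gon, there exists a sectional path
of length `m` from `d` to `d'` in `Γ(nm, 1)` iff there is an arrow `d → d'` in
`Γ(n, m)`, i.e. iff `d = {i, j}` and `d' = {i, j + m}` or `d' = {i + m, j}` with
`d'` a diagonal. -/
theorem sectionalPath_iff_arrowG (n m : ℕ) (hn : 2 ≤ n) (hm : 1 ≤ m)
    (d d' : Sym2 (ZMod (n * m + 2)))
    (hd : IsMDiag (n * m + 2) m d) (hd' : IsMDiag (n * m + 2) m d') :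
    ArrowP (n * m + 2) m d d' ↔ ArrowG (n * m + 2) m d d' := by
  constructor
  · rintro ⟨p, hp, hp0, hpm⟩
    obtain ⟨i, j, hde, -, -, -, -⟩ := id hd
    have h01 := hp.1 0 (by omega)
    have hq0 : p 0 = s(i, j) := by rw [hp0, hde]
    rcases arrow1_step h01 hq0 with h1 | h1
    · have hl := sectional_line hp hq0 h1 m le_rfl
      exact ⟨hd, hd', i, j, hde, Or.inl (by rw [← hpm, hl])⟩
    · have h0' : p 0 = s(j, i) := by rw [hq0, Sym2.eq_swap]
      have h1' : p 1 = s(j, i + 1) := by rw [h1, Sym2.eq_swap]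
      have hl := sectional_line hp h0' h1' m le_rfl
      refine ⟨hd, hd', i, j, hde, Or.inr ?_⟩
      rw [← hpm, hl]
      exact Sym2.eq_swap
  · rintro ⟨-, -, i, j, hde, hcase | hcase⟩
    · rw [hde, hcase]
      apply build_path hn hm
      · rw [← hde]; exact hd
      · rw [← hcase]; exact hd'
    · rw [hde, hcase]
      have e1 : s(i, j) = s(j, i) := Sym2.eq_swap
      have e2 : s(i + (m : ZMod (n*m+2)), j) = s(j, i + (m : ZMod (n*m+2))) := Sym2.eq_swap
      rw [e1, e2]
      apply build_path hn hm
      · rw [← e1, ← hde]; exact hd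
      · rw [← e2, ← hcase]; exact hd'
end

section
/- The m-th power of the diagonal quiver is again a stable translation quiver: for any two diagonals d and d' of the (nm+2)-gon, there exists a sectional path of length m from d to d' in Γ(nm,1) if and only if there exists a sectional path of length m from τ^m(d') to d, where τ^m{i,j} = {i−m, j−m}. -/
lemma myOneNeZero (N : ℕ) (hN : 1 < N) : (1 : ZMod N) ≠ 0 := by
  haveI : NeZero N := ⟨by omega⟩
  intro h
  have h2 : ((1 : ℕ) : ZMod N) = 0 := by exact_mod_cast h
  rw [ZMod.natCast_eq_zero_iff] at h2
  have := Nat.le_of_dvd one_pos h2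
  omega

lemma isDiag_iff (N : ℕ) (a b : ZMod N) :
    IsDiag N s(a, b) ↔ b ≠ a - 1 ∧ b ≠ a ∧ b ≠ a + 1 := by
  constructor
  · rintro ⟨i, j, hij, h1, h2, h3⟩
    rw [Sym2.eq_iff] at hij
    rcases hij with ⟨rfl, rfl⟩ | ⟨rfl, rfl⟩
    · exact ⟨h1, h2, h3⟩
    · exact ⟨fun h => h3 (by linear_combination -h), fun h => h2 h.symm,
        fun h => h1 (by linear_combination -h)⟩
  · rintro ⟨h1, h2, h3⟩
    exact ⟨a, b, rfl, h1, h2, h3⟩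

lemma isDiag_shift (N : ℕ) (x y c : ZMod N) (h : IsDiag N s(x, y)) :
    IsDiag N s(x + c, y + c) := by
  rw [isDiag_iff] at h ⊢
  exact ⟨fun e => h.1 (by linear_combination e), fun e => h.2.1 (by linear_combination e),
    fun e => h.2.2 (by linear_combination e)⟩

lemma diag_transfer (N m : ℕ) (i j : ZMod N)
    (H : ∀ k : ℕ, k ≤ m → IsDiag N s(i, j + (k : ZMod N))) :
    ∀ k : ℕ, k ≤ m → IsDiag N s(j, i - (m : ZMod N) + (k : ZMod N)) := by
  intro k hk
  have H' : ∀ t : ℕ, t ≤ m → ((j + (t : ZMod N)) ≠ i - 1 ∧ (j + (t : ZMod N)) ≠ i ∧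
      (j + (t : ZMod N)) ≠ i + 1) := fun t ht => (isDiag_iff N i (j + t)).mp (H t ht)
  rw [isDiag_iff]
  refine ⟨?_, ?_, ?_⟩
  · intro h
    by_cases hkm : k = m
    · subst hkm
      exact (H' 0 (Nat.zero_le _)).2.2 (by push_cast; linear_combination -h)
    · have e1 : (m - k - 1) + (k + 1) = m := by omega
      have e := congrArg (Nat.cast : ℕ → ZMod N) e1
      push_cast at e
      exact (H' (m - k - 1) (by omega)).2.1 (by linear_combination e - h)
  · intro h
    have e1 : (m - k) + k = m := by omega
    have e := congrArg (Nat.cast : ℕ → ZMod N) e1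
    push_cast at e
    exact (H' (m - k) (by omega)).2.1 (by linear_combination e - h)
  · intro h
    have e1 : (m - k) + k = m := by omega
    have e := congrArg (Nat.cast : ℕ → ZMod N) e1
    push_cast at e
    exact (H' (m - k) (by omega)).1 (by linear_combination e - h)

lemma build (N m : ℕ) (hN : 1 < N) (i j : ZMod N)
    (H : ∀ k : ℕ, k ≤ m → IsDiag N s(i, j + (k : ZMod N))) :
    ArrowP N m s(i, j) s(i, j + (m : ZMod N)) := by
  refine ⟨fun k => s(i, j + (k : ZMod N)), ⟨?_, ?_⟩, by norm_num, rfl⟩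
  · intro k hk
    refine ⟨H k hk.le, ?_, i, j + (k : ZMod N), rfl, Or.inl ?_⟩
    · have := H (k + 1) hk
      push_cast at this ⊢
      convert this using 3 <;> ring
    · push_cast; rw [Sym2.eq_iff]; left; exact ⟨rfl, by ring⟩
  · intro k hk1 hkm
    simp only [tauRot, Sym2.map_pair_eq]
    intro heq
    rw [Sym2.eq_iff] at heq
    have hc : ((k - 1 : ℕ) : ZMod N) = (k : ZMod N) - 1 := by
      have e1 : (k - 1) + 1 = k := by omega
      have e := congrArg (Nat.cast : ℕ → ZMod N) e1
      push_cast at e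
      linear_combination e
    rcases heq with ⟨h1, h2⟩ | ⟨h1, h2⟩
    · exact myOneNeZero N hN (by linear_combination -h1)
    · have := (isDiag_iff N i (j + (k : ZMod N))).mp (H k hkm.le)
      exact this.2.1 (by push_cast at h2; linear_combination h2)

lemma sectional_char (N m : ℕ) (hm : 1 ≤ m) (p : ℕ → Sym2 (ZMod N))
    (hp : IsSectionalPath N m p) :
    ∃ i j : ZMod N, ∀ k : ℕ, k ≤ m → p k = s(i, j + (k : ZMod N)) := by
  obtain ⟨harr, hsec⟩ := hp
  suffices h : ∀ M : ℕ, 1 ≤ M → M ≤ m →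
      ∃ i j : ZMod N, ∀ k : ℕ, k ≤ M → p k = s(i, j + (k : ZMod N)) by
    exact h m hm le_rfl
  intro M
  induction M with
  | zero => omega
  | succ M ih =>
    intro _ hMm
    by_cases hM0 : M = 0
    · subst hM0
      obtain ⟨_, _, i, j, h0, hor⟩ := harr 0 (by omega)
      rcases hor with h1 | h1
      · refine ⟨i, j, ?_⟩
        intro k hk
        interval_cases k
        · simpa using h0
        · simpa using h1
      · refine ⟨j, i, ?_⟩
        intro k hk
        interval_cases k
        · rw [h0]; push_cast; rw [Sym2.eq_iff]; right; exact ⟨by ring, rfl⟩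
        · rw [h1]; push_cast; rw [Sym2.eq_iff]; right; exact ⟨rfl, rfl⟩
    · obtain ⟨i, j, hij⟩ := ih (by omega) (by omega)
      obtain ⟨_, _, a, b, hM, hor⟩ := harr M (by omega)
      have hab : s(a, b) = s(i, j + (M : ZMod N)) := by rw [← hM, hij M le_rfl]
      rw [Sym2.eq_iff] at hab
      have hMdiag : IsDiag N (p M) := (harr M (by omega)).1
      rw [hij M le_rfl, isDiag_iff] at hMdiag
      have hsecM := hsec M (by omega) (by omega)
      have hpm1 : p (M - 1) = s(i, j + (M : ZMod N) - 1) := by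
        rw [hij (M - 1) (by omega)]
        have e1 : (M - 1) + 1 = M := by omega
        have e := congrArg (Nat.cast : ℕ → ZMod N) e1
        push_cast at e
        rw [Sym2.eq_iff]; left; exact ⟨rfl, by linear_combination e⟩
      have hbad : p (M + 1) ≠ s(i + 1, j + (M : ZMod N)) := by
        intro hb
        apply hsecM
        rw [hb, hpm1]
        simp only [tauRot, Sym2.map_pair_eq]
        rw [Sym2.eq_iff]; left
        exact ⟨by push_cast; ring, by push_cast; ring⟩
      have hgood : p (M + 1) = s(i, j + ((M : ZMod N) + 1)) →
          ∃ i j : ZMod N, ∀ k : ℕ, k ≤ M + 1 → p k = s(i, j + (k : ZMod N)) := by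
        intro hg
        refine ⟨i, j, ?_⟩
        intro k hk
        rcases Nat.lt_or_ge k (M + 1) with hk' | hk'
        · exact hij k (by omega)
        · have hke : k = M + 1 := by omega
          subst hke
          rw [hg]; push_cast; rw [Sym2.eq_iff]; left; exact ⟨rfl, by ring⟩
      rcases hab with ⟨ha, hb2⟩ | ⟨ha, hb2⟩ <;> rcases hor with h1 | h1
      · exact hgood (by rw [h1, ha, hb2]; rw [Sym2.eq_iff]; left; exact ⟨rfl, by ring⟩)
      · exact absurd (by rw [h1, ha, hb2]) hbad
      · exact absurd (by rw [h1, ha, hb2]; rw [Sym2.eq_iff]; right; exact ⟨by ring, rfl⟩) hbad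
      · exact hgood (by rw [h1, ha, hb2]; rw [Sym2.eq_iff]; right; exact ⟨by ring, rfl⟩)

lemma destructP (N m : ℕ) (hm : 1 ≤ m) (d d' : Sym2 (ZMod N)) (h : ArrowP N m d d') :
    ∃ i j : ZMod N, d = s(i, j) ∧ d' = s(i, j + (m : ZMod N)) ∧
      ∀ k : ℕ, k ≤ m → IsDiag N s(i, j + (k : ZMod N)) := by
  obtain ⟨p, hp, h0, hm'⟩ := h
  obtain ⟨i, j, hij⟩ := sectional_char N m hm p hp
  refine ⟨i, j, ?_, ?_, ?_⟩
  · rw [← h0, hij 0 (by omega)]; norm_num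
  · rw [← hm', hij m le_rfl]
  · intro k hk
    rcases Nat.lt_or_ge k m with hk' | hk'
    · rw [← hij k hk]; exact (hp.1 k hk').1
    · have hke : k = m := by omega
      have e : m - 1 + 1 = m := by omega
      have := (hp.1 (m - 1) (by omega)).2.1
      rw [e] at this
      rw [hke, ← hij m le_rfl]; exact this

lemma tau_eq (N m : ℕ) (d : Sym2 (ZMod N)) (a b : ZMod N)
    (h : tauRot N m d = s(a, b)) : d = s(a + (m : ZMod N), b + (m : ZMod N)) := by
  induction d using Sym2.ind with
  | _ x y =>
    simp only [tauRot, Sym2.map_pair_eq] at h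
    rw [Sym2.eq_iff] at h ⊢
    rcases h with ⟨h1, h2⟩ | ⟨h1, h2⟩
    · left; exact ⟨by linear_combination h1, by linear_combination h2⟩
    · right; exact ⟨by linear_combination h1, by linear_combination h2⟩

lemma fwdP (N m : ℕ) (hN : 1 < N) (hm : 1 ≤ m) (d d' : Sym2 (ZMod N))
    (h : ArrowP N m d d') : ArrowP N m (tauRot N m d') d := by
  obtain ⟨i, j, hd, hd', H⟩ := destructP N m hm d d' h
  have H2 := diag_transfer N m i j H
  have hb := build N m hN j (i - (m : ZMod N)) H2
  have ht : tauRot N m d' = s(j, i - (m : ZMod N)) := by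
    rw [hd']
    simp only [tauRot, Sym2.map_pair_eq]
    rw [Sym2.eq_iff]; right; exact ⟨rfl, by ring⟩
  have he : s(j, i - (m : ZMod N) + (m : ZMod N)) = d := by
    rw [hd, Sym2.eq_iff]; right; exact ⟨rfl, by ring⟩
  rw [ht, ← he]
  exact hb

lemma equivariantP (N m : ℕ) (hN : 1 < N) (hm : 1 ≤ m) (d d' : Sym2 (ZMod N))
    (h : ArrowP N m (tauRot N m d) (tauRot N m d')) : ArrowP N m d d' := by
  obtain ⟨i, j, h1, h2, H⟩ := destructP N m hm _ _ h
  have hd : d = s(i + (m : ZMod N), j + (m : ZMod N)) := tau_eq N m d i j h1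
  have hd' : d' = s(i + (m : ZMod N), j + (m : ZMod N) + (m : ZMod N)) :=
    tau_eq N m d' i (j + (m : ZMod N)) h2
  have H2 : ∀ k : ℕ, k ≤ m → IsDiag N s(i + (m : ZMod N), j + (m : ZMod N) + (k : ZMod N)) := by
    intro k hk
    have := isDiag_shift N i (j + (k : ZMod N)) (m : ZMod N) (H k hk)
    have e : j + (k : ZMod N) + (m : ZMod N) = j + (m : ZMod N) + (k : ZMod N) := by ring
    rwa [e] at this
  have hb := build N m hN (i + (m : ZMod N)) (j + (m : ZMod N)) H2
  rw [hd, hd']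
  exact hb

/-- The `m`-th power of the diagonal quiver is again a stable translation quiver:
for any two diagonals `d`, `d'` of the `(nm+2)`-gon, there is a sectional path of
length `m` from `d` to `d'` in `Γ(nm, 1)` iff there is a sectional path of length
`m` from `τ^m d' = {i - m, j - m}` to `d`. -/
theorem power_stable_translation_quiver (n m : ℕ) (hn : 2 ≤ n) (hm : 1 ≤ m)
    (d d' : Sym2 (ZMod (n * m + 2)))
    (hd : IsDiag (n * m + 2) d) (hd' : IsDiag (n * m + 2) d') :
    ArrowP (n * m + 2) m d d' ↔ ArrowP (n * m + 2) m (tauRot (n * m + 2) m d') d := by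
  have hN : 1 < n * m + 2 := by omega
  constructor
  · exact fwdP _ m hN hm d d'
  · intro h
    exact equivariantP _ m hN hm d d' (fwdP _ m hN hm _ d h)
end

section
/- In the quiver Γ(n,m) of m-diagonals of the (nm+2)-gon, between any two vertices there is at most one arrow, and every vertex has at most two outgoing and at most two incoming arrows. -/
/-- In the quiver `Γ(n, m)` of `m`-diagonals of the `(nm+2)`-gon, between any two
vertices there is at most one arrow (the two possible targets `{i, j+m}` and
`{i+m, j}` of arrows out of `{i, j}` are always distinct), and every vertex has
at most two outgoing and at most two incoming arrows. -/
theorem gammaNM_arrow_bounds (n m : ℕ) (hn : 2 ≤ n) (hm : 1 ≤ m)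
    (d : Sym2 (ZMod (n * m + 2))) (hd : IsMDiag (n * m + 2) m d) :
    (∀ i j : ZMod (n * m + 2), d = s(i, j) →
        s(i, j + (m : ZMod (n * m + 2))) ≠ s(i + (m : ZMod (n * m + 2)), j)) ∧
    {d' | ArrowG (n * m + 2) m d d'}.ncard ≤ 2 ∧
    {d' | ArrowG (n * m + 2) m d' d}.ncard ≤ 2 := by
  obtain ⟨a, b, hab, hba1, hbane, hba2, hmod⟩ := hd
  have hm0 : (m : ZMod (n * m + 2)) ≠ 0 := by
    intro h
    rw [ZMod.natCast_eq_zero_iff] at h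
    have := Nat.le_of_dvd hm h
    nlinarith
  have key : ∀ i j : ZMod (n * m + 2), d = s(i, j) →
      s(i, j + (m : ZMod (n * m + 2))) ≠ s(i + (m : ZMod (n * m + 2)), j) := by
    intro i j hij h
    have hij' : (i = a ∧ j = b) ∨ (i = b ∧ j = a) := by
      rw [hij, Sym2.eq_iff] at hab; tauto
    have hne : j ≠ i := by
      rcases hij' with ⟨rfl, rfl⟩ | ⟨rfl, rfl⟩
      · exact hbane
      · exact fun h' => hbane h'.symm
    rw [Sym2.eq_iff] at h
    rcases h with ⟨h1, h2⟩ | ⟨h1, h2⟩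
    · exact hm0 ((left_eq_add).mp h1)
    · exact hne h1.symm
  refine ⟨key, ?_, ?_⟩
  · have hsub : {d' | ArrowG (n * m + 2) m d d'} ⊆
        {s(a, b + (m : ZMod (n * m + 2))), s(a + (m : ZMod (n * m + 2)), b)} := by
      rintro d' ⟨-, -, i, j, hij, h⟩
      have hij' : (i = a ∧ j = b) ∨ (i = b ∧ j = a) := by
        rw [hij, Sym2.eq_iff] at hab; tauto
      rcases hij' with ⟨rfl, rfl⟩ | ⟨rfl, rfl⟩
      · rcases h with rfl | rfl
        · exact Set.mem_insert _ _
        · exact Set.mem_insert_of_mem _ rfl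
      · rcases h with rfl | rfl
        · exact Set.mem_insert_of_mem _ (Set.mem_singleton_iff.mpr (Sym2.eq_swap))
        · exact Set.mem_insert_iff.mpr (Or.inl (Sym2.eq_swap))
    calc ({d' | ArrowG (n * m + 2) m d d'}).ncard
        ≤ ({s(a, b + (m : ZMod (n * m + 2))), s(a + (m : ZMod (n * m + 2)), b)} :
            Set (Sym2 (ZMod (n * m + 2)))).ncard :=
          Set.ncard_le_ncard hsub (Set.toFinite _)
      _ ≤ 2 := by
          refine (Set.ncard_insert_le _ _).trans ?_
          simp
  · have hsub : {d' | ArrowG (n * m + 2) m d' d} ⊆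
        {s(a, b - (m : ZMod (n * m + 2))), s(a - (m : ZMod (n * m + 2)), b)} := by
      rintro d' ⟨-, -, i, j, hij, h⟩
      rw [hab] at h
      rcases h with h | h
      · rw [Sym2.eq_iff] at h
        rcases h with ⟨rfl, hb⟩ | ⟨ha, rfl⟩
        · have : j = b - (m : ZMod (n * m + 2)) := by rw [hb]; ring
          rw [hij, this]; exact Set.mem_insert _ _
        · have : j = a - (m : ZMod (n * m + 2)) := by rw [ha]; ring
          rw [hij, this]
          exact Set.mem_insert_of_mem _ (Set.mem_singleton_iff.mpr (Sym2.eq_swap))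
      · rw [Sym2.eq_iff] at h
        rcases h with ⟨ha, rfl⟩ | ⟨rfl, hb⟩
        · have : i = a - (m : ZMod (n * m + 2)) := by rw [ha]; ring
          rw [hij, this]; exact Set.mem_insert_of_mem _ rfl
        · have : i = b - (m : ZMod (n * m + 2)) := by rw [hb]; ring
          rw [hij, this]; exact Set.mem_insert_iff.mpr (Or.inl (Sym2.eq_swap))
    calc ({d' | ArrowG (n * m + 2) m d' d}).ncard
        ≤ ({s(a, b - (m : ZMod (n * m + 2))), s(a - (m : ZMod (n * m + 2)), b)} :
            Set (Sym2 (ZMod (n * m + 2)))).ncard :=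
          Set.ncard_le_ncard hsub (Set.toFinite _)
      _ ≤ 2 := by
          refine (Set.ncard_insert_le _ _).trans ?_
          simp
end
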